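/- Let X be a real-valued square-integrable random variable that is not almost surely constant, and let 0 < α < β. Every minimizer t of the expectile-loss risk φ(t) = E[α·(max(X − t, 0))² + β·(max(t − X, 0))²] satisfies the strict inequality t < E[X]. -/

import Mathlib

/-!
Write `φ t = E ρ(X - t)` with `ρ u = α (u⁺)² + β (u⁻)²`. The derivative `ρ' u = 2 (α u⁺ - β u⁻)`
is `2 max α β`-Lipschitz, so `φ (t - h) ≤ φ t + 2 (α E(X - t)⁺ - β E(t - X)⁺) h + max α β h²`,
and at a minimiser the slope must vanish: `α E(X - t)⁺ = β E(t - X)⁺`. If `E X ≤ t`, then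
`E(X - t)⁺ ≤ E(t - X)⁺`, their difference being `E X - t`; together with `α < β` this forces both
expectations to vanish, i.e. `X = t` almost surely.
-/

open MeasureTheory

def expectileLoss (α β u : ℝ) : ℝ := α * max u 0 ^ 2 + β * max (-u) 0 ^ 2

theorem expectileLoss_add_le (α β u h : ℝ) :
    expectileLoss α β (u + h) ≤
      expectileLoss α β u + 2 * (α * max u 0 - β * max (-u) 0) * h + max α β * h ^ 2 := by
  have hαM : α ≤ max α β := le_max_left α β
  have hβM : β ≤ max α β := le_max_right α β
  unfold expectileLoss
  rcases le_total 0 u with hu | hu <;> rcases le_total 0 (u + h) with huh | huh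
  · rw [max_eq_left hu, max_eq_right (by linarith : -u ≤ 0), max_eq_left huh,
      max_eq_right (by linarith : -(u + h) ≤ 0)]
    nlinarith [sq_nonneg h]
  · rw [max_eq_left hu, max_eq_right (by linarith : -u ≤ 0), max_eq_right huh,
      max_eq_left (by linarith : 0 ≤ -(u + h))]
    nlinarith [mul_nonneg (sub_nonneg.2 hβM) (sq_nonneg (u + h)),
      mul_nonneg hu (neg_nonneg.2 huh)]
  · rw [max_eq_right hu, max_eq_left (by linarith : 0 ≤ -u), max_eq_left huh,
      max_eq_right (by linarith : -(u + h) ≤ 0)]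
    nlinarith [mul_nonneg (sub_nonneg.2 hαM) (sq_nonneg (u + h)),
      mul_nonneg huh (neg_nonneg.2 hu)]
  · rw [max_eq_right hu, max_eq_left (by linarith : 0 ≤ -u), max_eq_right huh,
      max_eq_left (by linarith : 0 ≤ -(u + h))]
    nlinarith [sq_nonneg h]

theorem eq_zero_of_forall_nonneg_mul_add_sq {c M : ℝ} (hM : 0 ≤ M)
    (h : ∀ x : ℝ, 0 ≤ c * x + M * x ^ 2) : c = 0 := by
  -- at `x = -c / (M + 1)` the right-hand side is `-(c / (M + 1))²`
  obtain ⟨y, rfl⟩ : ∃ y, c = (M + 1) * y := ⟨c / (M + 1), by field_simp⟩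
  have hy : y = 0 :=
    pow_eq_zero_iff two_ne_zero |>.1 <| le_antisymm (by nlinarith [h (-y)]) (sq_nonneg y)
  rw [hy, mul_zero]

section

variable {Ω : Type*} [MeasurableSpace Ω] {μ : Measure Ω} {X : Ω → ℝ}

theorem integrable_expectileLoss_sub [IsFiniteMeasure μ] (hX : MemLp X 2 μ) (α β t : ℝ) :
    Integrable (fun ω => expectileLoss α β (X ω - t)) μ := by
  have hXt : MemLp (fun ω => X ω - t) 2 μ := hX.sub (memLp_const t)
  exact (hXt.pos_part.integrable_sq.const_mul α).add (hXt.neg_part.integrable_sq.const_mul β)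

theorem integral_expectileLoss_sub_sub_le [IsFiniteMeasure μ] (hX : MemLp X 2 μ)
    (α β t h : ℝ) :
    ∫ ω, expectileLoss α β (X ω - (t - h)) ∂μ ≤
      ∫ ω, expectileLoss α β (X ω - t) ∂μ
        + 2 * (α * ∫ ω, max (X ω - t) 0 ∂μ - β * ∫ ω, max (t - X ω) 0 ∂μ) * h
        + μ.real Set.univ * max α β * h ^ 2 := by
  have hXt : Integrable (fun ω => X ω - t) μ :=
    (hX.integrable one_le_two).sub (integrable_const t)
  have hpos := hXt.pos_part.const_mul α
  have hneg := hXt.neg_part.const_mul β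
  have hslope : Integrable
      (fun ω => 2 * (α * max (X ω - t) 0 - β * max (-(X ω - t)) 0) * h) μ :=
    ((hpos.sub hneg).const_mul 2).mul_const h
  have hloss := integrable_expectileLoss_sub hX α β t
  have hlin : Integrable (fun ω => expectileLoss α β (X ω - t)
      + 2 * (α * max (X ω - t) 0 - β * max (-(X ω - t)) 0) * h) μ := hloss.add hslope
  calc ∫ ω, expectileLoss α β (X ω - (t - h)) ∂μ
      ≤ ∫ ω, (expectileLoss α β (X ω - t)
          + 2 * (α * max (X ω - t) 0 - β * max (-(X ω - t)) 0) * h + max α β * h ^ 2) ∂μ := by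
        refine integral_mono (integrable_expectileLoss_sub hX α β _)
          (hlin.add (integrable_const _)) fun ω => ?_
        simpa only [sub_sub_eq_add_sub, add_sub_right_comm] using
          expectileLoss_add_le α β (X ω - t) h
    _ = _ := by
        rw [integral_add hlin (integrable_const _), integral_add hloss hslope,
          integral_mul_const, integral_const_mul, integral_sub hpos hneg, integral_const_mul,
          integral_const_mul, integral_const, smul_eq_mul]
        simp only [neg_sub]
        ring

theorem expectile_first_order_condition [IsFiniteMeasure μ] {α : ℝ} (β : ℝ) (hα : 0 ≤ α)
    (hX : MemLp X 2 μ) {t : ℝ}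
    (ht : ∀ s, ∫ ω, expectileLoss α β (X ω - t) ∂μ ≤ ∫ ω, expectileLoss α β (X ω - s) ∂μ) :
    α * ∫ ω, max (X ω - t) 0 ∂μ = β * ∫ ω, max (t - X ω) 0 ∂μ := by
  have hslope : 2 * (α * ∫ ω, max (X ω - t) 0 ∂μ - β * ∫ ω, max (t - X ω) 0 ∂μ) = 0 :=
    eq_zero_of_forall_nonneg_mul_add_sq
      (mul_nonneg measureReal_nonneg (le_max_of_le_left hα) : 0 ≤ μ.real Set.univ * max α β)
      fun h => by linarith [ht (t - h), integral_expectileLoss_sub_sub_le hX α β t h]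
  linarith

theorem integral_max_sub_zero_sub_integral_max_sub_zero [IsProbabilityMeasure μ]
    (hX : Integrable X μ) (t : ℝ) :
    ∫ ω, max (X ω - t) 0 ∂μ - ∫ ω, max (t - X ω) 0 ∂μ = ∫ ω, X ω ∂μ - t := by
  have hXt : Integrable (fun ω => X ω - t) μ := hX.sub (integrable_const t)
  rw [← integral_sub hXt.pos_part (by simpa only [neg_sub] using hXt.neg_part)]
  have hdiff : ∀ ω, max (X ω - t) 0 - max (t - X ω) 0 = X ω - t := fun ω => by
    rw [← neg_sub (X ω) t, max_zero_sub_eq_self]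
  simp only [hdiff, integral_sub hX (integrable_const t), integral_const, probReal_univ,
    one_smul]

theorem ae_eq_const_of_integral_max_sub_eq_zero [IsFiniteMeasure μ] (hX : Integrable X μ)
    {t : ℝ} (hpos : ∫ ω, max (X ω - t) 0 ∂μ = 0) (hneg : ∫ ω, max (t - X ω) 0 ∂μ = 0) :
    X =ᵐ[μ] fun _ => t := by
  have hXt : Integrable (fun ω => X ω - t) μ := hX.sub (integrable_const t)
  have hpos0 := (integral_eq_zero_iff_of_nonneg (fun ω => le_max_right _ _) hXt.pos_part).1 hpos
  have hneg0 := (integral_eq_zero_iff_of_nonneg (f := fun ω => max (t - X ω) 0)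
    (fun ω => le_max_right _ _) (by simpa only [neg_sub] using hXt.neg_part)).1 hneg
  filter_upwards [hpos0, hneg0] with ω hposω hnegω
  have hdiff := max_zero_sub_eq_self (X ω - t)
  rw [neg_sub] at hdiff
  simp only [Pi.zero_apply] at hposω hnegω
  linarith

end

/-- If X is not a.s. constant and α < β, every minimizer of the
expectile-loss risk satisfies t < E[X] strictly. -/
theorem expectile_risk_min_lt_mean
    {Ω : Type*} [MeasurableSpace Ω] (μ : Measure Ω) [IsProbabilityMeasure μ]
    (X : Ω → ℝ) (hX : MemLp X 2 μ)
    (hnc : ¬ ∃ k : ℝ, X =ᵐ[μ] fun _ => k)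
    (α β : ℝ) (hα : 0 < α) (hαβ : α < β)
    (φ : ℝ → ℝ)
    (hφ : ∀ t, φ t = ∫ ω, (α * (max (X ω - t) 0) ^ 2 + β * (max (t - X ω) 0) ^ 2) ∂μ) :
    ∀ t : ℝ, (∀ s : ℝ, φ t ≤ φ s) → t < ∫ ω, X ω ∂μ := by
  intro t ht
  have hφ_eq : ∀ s, φ s = ∫ ω, expectileLoss α β (X ω - s) ∂μ := fun s => by
    simp only [hφ, expectileLoss, neg_sub]
  have hfoc := expectile_first_order_condition β hα.le hX (t := t) fun s => by
    simpa only [hφ_eq] using ht s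
  have hgap := integral_max_sub_zero_sub_integral_max_sub_zero (hX.integrable one_le_two) t
  have hpos : 0 ≤ ∫ ω, max (X ω - t) 0 ∂μ := integral_nonneg fun ω => le_max_right _ _
  have hneg : 0 ≤ ∫ ω, max (t - X ω) 0 ∂μ := integral_nonneg fun ω => le_max_right _ _
  by_contra! hle
  refine hnc ⟨t, ae_eq_const_of_integral_max_sub_eq_zero (hX.integrable one_le_two) ?_ ?_⟩ <;>
    nlinarith
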